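/- Fix N ∈ ℕ and an occupancy vector ζ : {0,…,N−1} → Bool, and define the Top-Down greedy selection s : {0,…,N−1} → Bool by s(0) = ζ(0) and s(j+1) = (ζ(j+1) and not s(j)). Then: (i) s(j) = true implies ζ(j) = true; (ii) there is no j with s(j) = s(j+1) = true; and (iii) for every subset T of {j : ζ(j) = true} containing no two consecutive indices, the cardinality of T is at most the cardinality of {j : s(j) = true}. In other words, the Top-Down policy selects a maximum-cardinality independent subset of the nonempty queues in the path graph, i.e., it is a Maximum Size Matching policy for every N. -/

import Mathlib

/-! The greedy selection `s` misses an occupied queue `j` only because it already serves `j - 1`.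
So every independent set `T` of occupied queues lies in `S ∪ (S + 1)`, where `S` is the greedy
selection, and `j ↦ j - 1` injects `T \ S` into `S \ T`. -/

open Finset

theorem card_le_card_of_subset_union_image_succ {S T : Finset ℕ}
    (hT : ∀ j ∈ T, j + 1 ∉ T) (hTS : T ⊆ S ∪ S.image (· + 1)) : #T ≤ #S := by
  have hsdiff : T \ S ⊆ (S \ T).image (· + 1) := by
    intro t ht
    obtain ⟨htT, htS⟩ := mem_sdiff.1 ht
    obtain ⟨k, hkS, rfl⟩ : ∃ k ∈ S, k + 1 = t := by
      simpa only [mem_union, mem_image, htS, false_or] using hTS htT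
    exact mem_image_of_mem _ (mem_sdiff.2 ⟨hkS, fun hkT => hT k hkT htT⟩)
  rw [← card_sdiff_le_card_sdiff_iff]
  exact (card_le_card hsdiff).trans card_image_le

section TopDown

variable {ζ s : ℕ → Bool}

theorem topDown_occupied_of_selected (hs0 : s 0 = ζ 0)
    (hsS : ∀ j, s (j + 1) = (ζ (j + 1) && !s j)) {j : ℕ} (hj : s j = true) : ζ j = true := by
  cases j with
  | zero => rwa [hs0] at hj
  | succ k => simp_all

theorem topDown_not_selected_and_selected_succ (hsS : ∀ j, s (j + 1) = (ζ (j + 1) && !s j))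
    (j : ℕ) : ¬(s j = true ∧ s (j + 1) = true) := by
  rintro ⟨hj, hj'⟩
  simp [hsS, hj] at hj'

theorem topDown_selected_or_selected_pred (hs0 : s 0 = ζ 0)
    (hsS : ∀ j, s (j + 1) = (ζ (j + 1) && !s j)) {j : ℕ} (hj : ζ j = true) :
    s j = true ∨ ∃ k, s k = true ∧ k + 1 = j := by
  cases j with
  | zero => exact .inl (hs0.trans hj)
  | succ k => cases hk : s k <;> simp_all

end TopDown

theorem topDown_greedy_is_MSM (N : ℕ) (ζ s : ℕ → Bool)
    (hs0 : s 0 = ζ 0)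
    (hsS : ∀ j, s (j + 1) = (ζ (j + 1) && !s j)) :
    (∀ j < N, s j = true → ζ j = true) ∧
    (∀ j, j + 1 < N → ¬(s j = true ∧ s (j + 1) = true)) ∧
    (∀ T : Finset ℕ,
      (∀ j ∈ T, j < N ∧ ζ j = true) →
      (∀ j ∈ T, j + 1 ∉ T) →
      T.card ≤ ((Finset.range N).filter (fun j => s j = true)).card) := by
  refine ⟨fun j _ => topDown_occupied_of_selected hs0 hsS,
    fun j _ => topDown_not_selected_and_selected_succ hsS j,
    fun T hT hind => card_le_card_of_subset_union_image_succ hind ?_⟩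
  intro t ht
  obtain ⟨htN, htζ⟩ := hT t ht
  rcases topDown_selected_or_selected_pred hs0 hsS htζ with hst | ⟨k, hsk, rfl⟩
  · exact mem_union_left _ (mem_filter.2 ⟨mem_range.2 htN, hst⟩)
  · exact mem_union_right _ (mem_image_of_mem _ (mem_filter.2 ⟨mem_range.2 (by omega), hsk⟩))
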